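/- Fix n ∈ ℕ with n ≥ 1 and real parameters a, b, α, β with (a−b+1|q)_n (2a−β+1|q)_n (a−b−α+1|q)_n ≠ 0. Then for every real s: [n]_q [2s+1]_q · ũ_n^{α,β}(x(s),a,b)_q = σ̃(−s−1) · ũ_{n−1}^{α,β}(x(s+1/2), a+1/2, b−1/2)_q − σ̃(s) · ũ_{n−1}^{α,β}(x(s−1/2), a+1/2, b−1/2)_q. -/

import Mathlib

open Finset

/-- The symmetric q-number `[s]_q = (q^{s/2} - q^{-s/2})/(q^{1/2} - q^{-1/2})`. -/
noncomputable def qnum (q s : ℝ) : ℝ :=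
  (q ^ (s / 2) - q ^ (-s / 2)) / (q ^ ((1 : ℝ) / 2) - q ^ (-(1 : ℝ) / 2))

/-- The symmetric q-factorial `[n]_q! = ∏_{m=1}^n [m]_q`. -/
noncomputable def qfact (q : ℝ) (n : ℕ) : ℝ :=
  ∏ m ∈ Finset.range n, qnum q ((m : ℝ) + 1)

/-- The symmetric q-Pochhammer symbol `(a|q)_k = ∏_{m=0}^{k-1} [a+m]_q`. -/
noncomputable def qpoch (q a : ℝ) (k : ℕ) : ℝ :=
  ∏ m ∈ Finset.range k, qnum q (a + (m : ℝ))

/-- The q-Racah polynomial `u_n^{α,β}(x(s),a,b)_q` on the lattice `x(s)=[s]_q[s+1]_q`. -/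
noncomputable def racahU (q a b α β : ℝ) (n : ℕ) (s : ℝ) : ℝ :=
  qpoch q (a - b + 1) n * qpoch q (β + 1) n * qpoch q (a + b + α + 1) n / qfact q n *
    ∑ k ∈ Finset.range (n + 1),
      qpoch q (-(n : ℝ)) k * qpoch q (α + β + (n : ℝ) + 1) k * qpoch q (a - s) k *
          qpoch q (a + s + 1) k /
        (qpoch q 1 k * qpoch q (a - b + 1) k * qpoch q (β + 1) k *
          qpoch q (a + b + α + 1) k)

/-- The alternative q-Racah polynomial `ũ_n^{α,β}(x(s),a,b)_q`. -/
noncomputable def racahUt (q a b α β : ℝ) (n : ℕ) (s : ℝ) : ℝ :=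
  qpoch q (a - b + 1) n * qpoch q (2 * a - β + 1) n * qpoch q (a - b - α + 1) n / qfact q n *
    ∑ k ∈ Finset.range (n + 1),
      qpoch q (-(n : ℝ)) k * qpoch q (2 * a - 2 * b - α - β + (n : ℝ) + 1) k *
          qpoch q (a - s) k * qpoch q (a + s + 1) k /
        (qpoch q 1 k * qpoch q (a - b + 1) k * qpoch q (2 * a - β + 1) k *
          qpoch q (a - b - α + 1) k)

/-- `σ(s) = [s-a]_q [s+b]_q [s+a-β]_q [b+α-s]_q`. -/
noncomputable def racahSigma (q a b α β s : ℝ) : ℝ :=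
  qnum q (s - a) * qnum q (s + b) * qnum q (s + a - β) * qnum q (b + α - s)

/-- `σ(-s-1) = [s+a+1]_q [b-s-1]_q [s-a+β+1]_q [b+α+s+1]_q`. -/
noncomputable def racahSigmaM (q a b α β s : ℝ) : ℝ :=
  qnum q (s + a + 1) * qnum q (b - s - 1) * qnum q (s - a + β + 1) * qnum q (b + α + s + 1)

/-- `σ̃(s) = [s-a]_q [s+b]_q [s-a+β]_q [b+α+s]_q`. -/
noncomputable def racahSigmaT (q a b α β s : ℝ) : ℝ :=
  qnum q (s - a) * qnum q (s + b) * qnum q (s - a + β) * qnum q (b + α + s)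

/-- `σ̃(-s-1) = [s+a+1]_q [b-s-1]_q [s+a-β+1]_q [b+α-s-1]_q`. -/
noncomputable def racahSigmaTM (q a b α β s : ℝ) : ℝ :=
  qnum q (s + a + 1) * qnum q (b - s - 1) * qnum q (s + a - β + 1) * qnum q (b + α - s - 1)

/-- `τ_n(s)` for the q-Racah polynomials. -/
noncomputable def racahTau (q a b α β : ℝ) (n : ℕ) (s : ℝ) : ℝ :=
  -qnum q (α + β + 2 * (n : ℝ) + 2) * qnum q (s + (n : ℝ) / 2) * qnum q (s + (n : ℝ) / 2 + 1) +
    qnum q (a + (n : ℝ) / 2 + 1) * qnum q (b - (n : ℝ) / 2 - 1) *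
      qnum q (β + (n : ℝ) / 2 + 1 - a) * qnum q (b + α + (n : ℝ) / 2 + 1) -
    qnum q (a + (n : ℝ) / 2) * qnum q (b - (n : ℝ) / 2) * qnum q (β + (n : ℝ) / 2 - a) *
      qnum q (b + α + (n : ℝ) / 2)

/-! Expand `ũ_n` in the basis `P_k(s) = (a-s|q)_k (a+s+1|q)_k`. The operator
`f ↦ σ̃(-s-1) f(s+1/2) - σ̃(s) f(s-1/2)` sends the basis for the parameters `(a+1/2, b-1/2)` to
`[2s+1]_q` times a combination of `P_k` and `P_{k+1}` (an identity between products of q-numbers,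
checked by clearing denominators in powers of `q^{1/2}`). Applied to `ũ_{n-1}(·, a+1/2, b-1/2)` this
produces a sum whose coefficients recombine, by the q-Pascal rule `[x][y] - [u][x+y-u] = [x-u][y-u]`
applied to `(-n|q)_k (2a-2b-α-β+n+1|q)_k / [k]_q!`, into `[n]_q` times the coefficients of `ũ_n`. -/

noncomputable def qexp (q x : ℝ) : ℝ := q ^ (x / 2)

section QNumber

variable {q : ℝ}

lemma qexp_ne_zero (hq : 0 < q) (x : ℝ) : qexp q x ≠ 0 := (Real.rpow_pos_of_pos hq _).ne'

lemma qexp_add (hq : 0 < q) (x y : ℝ) : qexp q (x + y) = qexp q x * qexp q y := by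
  rw [qexp, qexp, qexp, add_div, Real.rpow_add hq]

lemma qexp_neg (hq : 0 < q) (x : ℝ) : qexp q (-x) = (qexp q x)⁻¹ := by
  rw [qexp, qexp, neg_div, Real.rpow_neg hq.le]

lemma qexp_sub (hq : 0 < q) (x y : ℝ) : qexp q (x - y) = qexp q x * (qexp q y)⁻¹ := by
  rw [sub_eq_add_neg, qexp_add hq, qexp_neg hq]

lemma qexp_two_mul (hq : 0 < q) (x : ℝ) : qexp q (2 * x) = qexp q x * qexp q x := by
  rw [two_mul, qexp_add hq]

lemma qexp_two (hq : 0 < q) : qexp q 2 = qexp q 1 * qexp q 1 := by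
  simpa using qexp_two_mul hq 1

lemma qnum_eq_qexp (hq : 0 < q) (x : ℝ) :
    qnum q x = (qexp q x - (qexp q x)⁻¹) * (qexp q 1 - (qexp q 1)⁻¹)⁻¹ := by
  rw [qnum, div_eq_mul_inv, ← qexp_neg hq, ← qexp_neg hq]
  rfl

lemma qnum_zero : qnum q 0 = 0 := by
  simp [qnum]

lemma qnum_neg (hq : 0 < q) (x : ℝ) : qnum q (-x) = -qnum q x := by
  rw [qnum_eq_qexp hq, qnum_eq_qexp hq, qexp_neg hq, inv_inv]
  ring

lemma qnum_ne_zero (hq0 : 0 < q) (hq1 : q ≠ 1) {x : ℝ} (hx : x ≠ 0) : qnum q x ≠ 0 := by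
  have numerator_ne_zero : ∀ y : ℝ, y ≠ 0 → q ^ (y / 2) - q ^ (-y / 2) ≠ 0 := fun y hy h =>
    hy (by linarith [(Real.rpow_right_inj hq0 hq1).mp (sub_eq_zero.mp h)])
  exact div_ne_zero (numerator_ne_zero x hx) (numerator_ne_zero 1 one_ne_zero)

lemma qnum_mul_sub_qnum_mul (hq : 0 < q) (x y u : ℝ) :
    qnum q x * qnum q y - qnum q u * qnum q (x + y - u) = qnum q (x - u) * qnum q (y - u) := by
  simp only [qnum_eq_qexp hq, qexp_add hq, qexp_sub hq]
  generalize (qexp q 1 - (qexp q 1)⁻¹)⁻¹ = c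
  have := qexp_ne_zero hq x
  have := qexp_ne_zero hq y
  have := qexp_ne_zero hq u
  field_simp
  ring

end QNumber

section RacahSigma

variable {q : ℝ}

lemma racahSigmaTM_sub_racahSigmaT (hq : 0 < q) (a b α β s : ℝ) :
    racahSigmaTM q a b α β s - racahSigmaT q a b α β s =
      qnum q (2 * s + 1) *
        (qnum q (a - b + 1) * qnum q (2 * a - β + 1) * qnum q (a - b - α + 1) -
          qnum q (2 * a - 2 * b - α - β + 2) * qnum q (a - s) * qnum q (a + s + 1)) := by
  simp only [racahSigmaTM, racahSigmaT, qnum_eq_qexp hq, qexp_add hq, qexp_sub hq,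
    qexp_two_mul hq, qexp_two hq]
  generalize (qexp q 1 - (qexp q 1)⁻¹)⁻¹ = c
  have := qexp_ne_zero hq 1
  have := qexp_ne_zero hq s
  have := qexp_ne_zero hq a
  have := qexp_ne_zero hq b
  have := qexp_ne_zero hq α
  have := qexp_ne_zero hq β
  field_simp
  ring

lemma racahSigmaTM_mul_sub_racahSigmaT_mul (hq : 0 < q) (a b α β s κ : ℝ) :
    racahSigmaTM q a b α β s * qnum q (a - s) * qnum q (a + s + κ + 1) -
        racahSigmaT q a b α β s * qnum q (a - s + κ) * qnum q (a + s + 1) =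
      qnum q (2 * s + 1) * qnum q (a - s) * qnum q (a + s + 1) *
        (qnum q (a - b + κ + 1) * qnum q (2 * a - β + κ + 1) * qnum q (a - b - α + κ + 1) -
          qnum q (2 * a - 2 * b - α - β + κ + 2) * qnum q (a - s + κ) *
            qnum q (a + s + κ + 1)) := by
  simp only [racahSigmaTM, racahSigmaT, qnum_eq_qexp hq, qexp_add hq, qexp_sub hq,
    qexp_two_mul hq, qexp_two hq]
  generalize (qexp q 1 - (qexp q 1)⁻¹)⁻¹ = c
  have := qexp_ne_zero hq 1
  have := qexp_ne_zero hq s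
  have := qexp_ne_zero hq a
  have := qexp_ne_zero hq b
  have := qexp_ne_zero hq α
  have := qexp_ne_zero hq β
  have := qexp_ne_zero hq κ
  field_simp
  ring

end RacahSigma

section Pochhammer

variable {q : ℝ}

lemma qpoch_zero (x : ℝ) : qpoch q x 0 = 1 := prod_range_zero _

lemma qpoch_succ (x : ℝ) (k : ℕ) : qpoch q x (k + 1) = qpoch q x k * qnum q (x + k) :=
  prod_range_succ _ _

lemma qpoch_succ' (x : ℝ) (k : ℕ) : qpoch q x (k + 1) = qnum q x * qpoch q (x + 1) k := by
  rw [qpoch, prod_range_succ', mul_comm, qpoch]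
  congr 1
  · simp
  · exact prod_congr rfl fun i _ => by push_cast; ring_nf

lemma qpoch_add (x : ℝ) (j r : ℕ) : qpoch q x (j + r) = qpoch q x j * qpoch q (x + j) r := by
  rw [qpoch, prod_range_add, qpoch, qpoch]
  congr 1
  exact prod_congr rfl fun i _ => by push_cast; ring_nf

lemma qfact_succ (k : ℕ) : qfact q (k + 1) = qfact q k * qnum q ((k : ℝ) + 1) :=
  prod_range_succ _ _

lemma qpoch_one_ne_zero (hq0 : 0 < q) (hq1 : q ≠ 1) (k : ℕ) : qpoch q 1 k ≠ 0 :=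
  prod_ne_zero_iff.mpr fun i _ => qnum_ne_zero hq0 hq1 (by positivity)

lemma qfact_ne_zero (hq0 : 0 < q) (hq1 : q ≠ 1) (k : ℕ) : qfact q k ≠ 0 :=
  prod_ne_zero_iff.mpr fun i _ => qnum_ne_zero hq0 hq1 (by positivity)

lemma qpoch_neg_natCast_succ (n : ℕ) : qpoch q (-(n : ℝ)) (n + 1) = 0 := by
  rw [qpoch_succ, neg_add_cancel, qnum_zero, mul_zero]

-- `(x|q)_n / (x|q)_k` for `k ≤ n`, without the division.
noncomputable def qpochQuot (q x : ℝ) (n k : ℕ) : ℝ := qpoch q (x + k) (n - k)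

lemma qpoch_eq_mul_qpochQuot (x : ℝ) {n k : ℕ} (hk : k ≤ n) :
    qpoch q x n = qpoch q x k * qpochQuot q x n k := by
  obtain ⟨r, rfl⟩ := Nat.exists_eq_add_of_le hk
  rw [qpochQuot, qpoch_add, Nat.add_sub_cancel_left]

lemma qpochQuot_succ_succ (x : ℝ) (n k : ℕ) :
    qpochQuot q x (n + 1) (k + 1) = qpochQuot q (x + 1) n k := by
  rw [qpochQuot, qpochQuot, Nat.add_sub_add_right]
  push_cast
  ring_nf

lemma qnum_mul_qpochQuot_succ (x : ℝ) {n k : ℕ} (hk : k ≤ n) :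
    qnum q (x + k) * qpochQuot q (x + 1) n k = qpochQuot q x (n + 1) k := by
  rw [qpochQuot, qpochQuot, Nat.succ_sub hk, qpoch_succ', add_right_comm]

end Pochhammer

noncomputable def racahQuot (q a b α β : ℝ) (n k : ℕ) : ℝ :=
  qpochQuot q (a - b + 1) n k * qpochQuot q (2 * a - β + 1) n k * qpochQuot q (a - b - α + 1) n k

noncomputable def racahCoeff (q a b α β : ℝ) (n k : ℕ) : ℝ :=
  qpoch q (-(n : ℝ)) k * qpoch q (2 * a - 2 * b - α - β + n + 1) k / qpoch q 1 k

noncomputable def racahBasis (q a s : ℝ) (k : ℕ) : ℝ :=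
  qpoch q (a - s) k * qpoch q (a + s + 1) k

section Racah

variable {q : ℝ}

lemma racahUt_eq_sum {a b α β : ℝ} {n : ℕ}
    (hnz : qpoch q (a - b + 1) n * qpoch q (2 * a - β + 1) n * qpoch q (a - b - α + 1) n ≠ 0)
    (s : ℝ) :
    racahUt q a b α β n s =
      (∑ k ∈ range (n + 1),
        racahQuot q a b α β n k * racahCoeff q a b α β n k * racahBasis q a s k) / qfact q n := by
  obtain ⟨⟨hA, hB⟩, hC⟩ := And.imp_left mul_ne_zero_iff.mp (mul_ne_zero_iff.mp hnz)
  rw [racahUt, mul_comm, sum_mul, sum_div]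
  refine sum_congr rfl fun k hk => ?_
  have hkn := mem_range_succ_iff.mp hk
  rw [qpoch_eq_mul_qpochQuot _ hkn] at hA hB hC
  rw [qpoch_eq_mul_qpochQuot (a - b + 1) hkn, qpoch_eq_mul_qpochQuot (2 * a - β + 1) hkn,
    qpoch_eq_mul_qpochQuot (a - b - α + 1) hkn]
  have := left_ne_zero_of_mul hA
  have := left_ne_zero_of_mul hB
  have := left_ne_zero_of_mul hC
  simp only [racahQuot, racahCoeff, racahBasis]
  field_simp

lemma qpoch_prod_shift_ne_zero {a b α β : ℝ} {m : ℕ}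
    (hnz : qpoch q (a - b + 1) (m + 1) * qpoch q (2 * a - β + 1) (m + 1) *
      qpoch q (a - b - α + 1) (m + 1) ≠ 0) :
    qpoch q (a + 1 / 2 - (b - 1 / 2) + 1) m * qpoch q (2 * (a + 1 / 2) - β + 1) m *
      qpoch q (a + 1 / 2 - (b - 1 / 2) - α + 1) m ≠ 0 := by
  rw [qpoch_succ', qpoch_succ', qpoch_succ'] at hnz
  rw [show a + 1 / 2 - (b - 1 / 2) + 1 = a - b + 1 + 1 by ring,
    show 2 * (a + 1 / 2) - β + 1 = 2 * a - β + 1 + 1 by ring,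
    show a + 1 / 2 - (b - 1 / 2) - α + 1 = a - b - α + 1 + 1 by ring]
  simp only [ne_eq, mul_eq_zero, not_or] at hnz ⊢
  tauto

lemma racahCoeff_zero (a b α β : ℝ) (n : ℕ) : racahCoeff q a b α β n 0 = 1 := by
  simp [racahCoeff, qpoch_zero]

lemma racahCoeff_succ_self (a b α β : ℝ) (n : ℕ) : racahCoeff q a b α β n (n + 1) = 0 := by
  rw [racahCoeff, qpoch_neg_natCast_succ, zero_mul, zero_div]

lemma racahCoeff_succ_succ (hq0 : 0 < q) (hq1 : q ≠ 1) (a b α β : ℝ) (m k : ℕ) :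
    racahCoeff q a b α β (m + 1) (k + 1) =
      racahCoeff q (a + 1 / 2) (b - 1 / 2) α β m (k + 1) -
        racahCoeff q (a + 1 / 2) (b - 1 / 2) α β m k *
          qnum q (2 * a - 2 * b - α - β + k + 2) := by
  set E := 2 * a - 2 * b - α - β
  have pascal := qnum_mul_sub_qnum_mul hq0 (k - m) (E + m + k + 3) (k + 1)
  rw [show (k : ℝ) - m + (E + m + k + 3) - (k + 1) = E + k + 2 by ring,
    show (k : ℝ) - m - (k + 1) = -(m + 1) by ring,
    show E + m + k + 3 - (k + 1) = E + m + 1 + 1 by ring, qnum_neg hq0] at pascal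
  have := qpoch_one_ne_zero hq0 hq1 k
  have := qnum_ne_zero hq0 hq1 (x := (k : ℝ) + 1) (by positivity)
  simp only [racahCoeff, show 2 * (a + 1 / 2) - 2 * (b - 1 / 2) - α - β = E + 2 by ring]
  push_cast
  rw [qpoch_succ' (-((m : ℝ) + 1)), qpoch_succ' (E + (m + 1) + 1), qpoch_succ (-(m : ℝ)),
    qpoch_succ (E + 2 + m + 1), qpoch_succ 1, show -((m : ℝ) + 1) + 1 = -m by ring,
    show E + (m + 1) + 1 + 1 = E + 2 + m + 1 by ring, show -(m : ℝ) + k = k - m by ring,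
    show E + 2 + m + 1 + k = E + m + k + 3 by ring, add_comm 1 (k : ℝ), qnum_neg hq0]
  field_simp
  linear_combination (norm := ring_nf) (-qpoch q (-(m : ℝ)) k * qpoch q (E + 2 + m + 1) k) * pascal

lemma sum_racahCoeff_succ (hq0 : 0 < q) (hq1 : q ≠ 1) (a b α β : ℝ) (m : ℕ) (T P : ℕ → ℝ) :
    ∑ j ∈ range (m + 1 + 1), T j * racahCoeff q a b α β (m + 1) j * P j =
      ∑ k ∈ range (m + 1),
        (T k * racahCoeff q (a + 1 / 2) (b - 1 / 2) α β m k * P k -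
          T (k + 1) * racahCoeff q (a + 1 / 2) (b - 1 / 2) α β m k *
            qnum q (2 * a - 2 * b - α - β + k + 2) * P (k + 1)) := by
  have reindex : ∑ k ∈ range (m + 1), T k * racahCoeff q (a + 1 / 2) (b - 1 / 2) α β m k * P k =
      ∑ k ∈ range (m + 1),
        T (k + 1) * racahCoeff q (a + 1 / 2) (b - 1 / 2) α β m (k + 1) * P (k + 1) +
        T 0 * racahCoeff q (a + 1 / 2) (b - 1 / 2) α β m 0 * P 0 := by
    rw [← sum_range_succ' (fun k => T k * racahCoeff q (a + 1 / 2) (b - 1 / 2) α β m k * P k),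
      sum_range_succ _ (m + 1), racahCoeff_succ_self, mul_zero, zero_mul, add_zero]
  rw [sum_range_succ', sum_sub_distrib, reindex]
  simp only [racahCoeff_succ_succ hq0 hq1, racahCoeff_zero, mul_sub, sub_mul, sum_sub_distrib,
    mul_assoc]
  ring

lemma racahQuot_shift (a b α β : ℝ) (m k : ℕ) :
    racahQuot q (a + 1 / 2) (b - 1 / 2) α β m k = racahQuot q a b α β (m + 1) (k + 1) := by
  simp only [racahQuot, qpochQuot_succ_succ]
  ring_nf

lemma qnum_mul_racahQuot_shift (a b α β : ℝ) {m k : ℕ} (hk : k ≤ m) :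
    qnum q (a - b + 1 + k) * qnum q (2 * a - β + 1 + k) * qnum q (a - b - α + 1 + k) *
        racahQuot q (a + 1 / 2) (b - 1 / 2) α β m k =
      racahQuot q a b α β (m + 1) k := by
  rw [racahQuot, racahQuot, ← qnum_mul_qpochQuot_succ _ hk, ← qnum_mul_qpochQuot_succ _ hk,
    ← qnum_mul_qpochQuot_succ _ hk, show a + 1 / 2 - (b - 1 / 2) + 1 = a - b + 1 + 1 by ring,
    show 2 * (a + 1 / 2) - β + 1 = 2 * a - β + 1 + 1 by ring,
    show a + 1 / 2 - (b - 1 / 2) - α + 1 = a - b - α + 1 + 1 by ring]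
  ring

lemma racahBasis_lowering (hq : 0 < q) (a b α β s : ℝ) (k : ℕ) :
    racahSigmaTM q a b α β s * racahBasis q (a + 1 / 2) (s + 1 / 2) k -
        racahSigmaT q a b α β s * racahBasis q (a + 1 / 2) (s - 1 / 2) k =
      qnum q (2 * s + 1) *
        (qnum q (a - b + 1 + k) * qnum q (2 * a - β + 1 + k) * qnum q (a - b - α + 1 + k) *
            racahBasis q a s k -
          qnum q (2 * a - 2 * b - α - β + k + 2) * racahBasis q a s (k + 1)) := by
  simp only [racahBasis, show a + 1 / 2 - (s + 1 / 2) = a - s by ring,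
    show a + 1 / 2 + (s + 1 / 2) + 1 = a + s + 2 by ring,
    show a + 1 / 2 - (s - 1 / 2) = a - s + 1 by ring,
    show a + 1 / 2 + (s - 1 / 2) + 1 = a + s + 1 by ring]
  cases k with
  | zero =>
    simp only [qpoch_zero, qpoch_succ, CharP.cast_eq_zero, add_zero, one_mul, mul_one]
    linear_combination racahSigmaTM_sub_racahSigmaT hq a b α β s
  | succ k =>
    push_cast
    rw [qpoch_succ' (a - s) (k + 1), qpoch_succ' (a + s + 1) (k + 1), qpoch_succ' (a - s),
      qpoch_succ' (a + s + 1), show a + s + 1 + 1 = a + s + 2 by ring, qpoch_succ (a - s + 1),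
      qpoch_succ (a + s + 2)]
    linear_combination (norm := ring_nf) qpoch q (a - s + 1) k * qpoch q (a + s + 2) k *
      racahSigmaTM_mul_sub_racahSigmaT_mul hq a b α β s (k + 1)

lemma sum_racahBasis_lowering (hq0 : 0 < q) (hq1 : q ≠ 1) (a b α β s : ℝ) (m : ℕ) :
    racahSigmaTM q a b α β s * (∑ k ∈ range (m + 1),
        racahQuot q (a + 1 / 2) (b - 1 / 2) α β m k * racahCoeff q (a + 1 / 2) (b - 1 / 2) α β m k *
          racahBasis q (a + 1 / 2) (s + 1 / 2) k) -
      racahSigmaT q a b α β s * (∑ k ∈ range (m + 1),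
        racahQuot q (a + 1 / 2) (b - 1 / 2) α β m k * racahCoeff q (a + 1 / 2) (b - 1 / 2) α β m k *
          racahBasis q (a + 1 / 2) (s - 1 / 2) k) =
      qnum q (2 * s + 1) * ∑ j ∈ range (m + 1 + 1),
        racahQuot q a b α β (m + 1) j * racahCoeff q a b α β (m + 1) j * racahBasis q a s j := by
  rw [sum_racahCoeff_succ hq0 hq1, mul_sum, mul_sum, mul_sum, ← sum_sub_distrib]
  refine sum_congr rfl fun k hk => ?_
  rw [← qnum_mul_racahQuot_shift a b α β (mem_range_succ_iff.mp hk), ← racahQuot_shift]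
  linear_combination racahQuot q (a + 1 / 2) (b - 1 / 2) α β m k *
    racahCoeff q (a + 1 / 2) (b - 1 / 2) α β m k * racahBasis_lowering hq0 a b α β s k

end Racah

theorem stmt_16 (q : ℝ) (hq0 : 0 < q) (hq1 : q ≠ 1) (n : ℕ) (hn : 1 ≤ n) (a b α β : ℝ)
    (hnz : qpoch q (a - b + 1) n * qpoch q (2 * a - β + 1) n *
      qpoch q (a - b - α + 1) n ≠ 0) :
    ∀ s : ℝ,
      qnum q (n : ℝ) * qnum q (2 * s + 1) * racahUt q a b α β n s =
        racahSigmaTM q a b α β s *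
            racahUt q (a + 1 / 2) (b - 1 / 2) α β (n - 1) (s + 1 / 2) -
          racahSigmaT q a b α β s *
            racahUt q (a + 1 / 2) (b - 1 / 2) α β (n - 1) (s - 1 / 2) := by
  intro s
  obtain ⟨m, rfl⟩ : ∃ m, n = m + 1 := ⟨n - 1, by omega⟩
  have := qnum_ne_zero hq0 hq1 (x := (m : ℝ) + 1) (by positivity)
  have := qfact_ne_zero hq0 hq1 m
  rw [Nat.add_sub_cancel, racahUt_eq_sum hnz, racahUt_eq_sum (qpoch_prod_shift_ne_zero hnz),
    racahUt_eq_sum (qpoch_prod_shift_ne_zero hnz)]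
  simp only [mul_div_assoc']
  rw [← sub_div, sum_racahBasis_lowering hq0 hq1, qfact_succ]
  push_cast
  field_simp
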